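/- Let R = Z[y, y^{-1}] and consider the formal Laurent series ring. For r ≥ 1 define L(r) = z^{1-r} * Σ_{n≥0} (-1)^n C(r-1, n) (y+y^{-1})^{r-n-1} z^n. Let d = z^{-1}(y + y^{-1}) - 1. Then for all r, r' ≥ 1: d * L(r) * L(r') = L(r + r'). -/
import Mathlib


open LaurentPolynomial Finset

/-- `Y = y + y⁻¹` in `ℤ[y, y⁻¹]`. -/
noncomputable def Y : LaurentPolynomial ℤ := T 1 + T (-1)

/-- The formal Laurent series variable `z`. -/
noncomputable def z : LaurentSeries (LaurentPolynomial ℤ) := HahnSeries.single 1 1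

/-- `z⁻¹`. -/
noncomputable def zinv : LaurentSeries (LaurentPolynomial ℤ) := HahnSeries.single (-1) 1

/-- The generating series
`L(r) = z^{1-r} Σ_{n≥0} (-1)^n C(r-1,n) (y+y⁻¹)^{r-n-1} z^n` of the trivial
`r`-component link; the coefficients vanish for `n ≥ r`, so the sum is finite. -/
noncomputable def L (r : ℕ) : LaurentSeries (LaurentPolynomial ℤ) :=
  HahnSeries.single (1 - (r : ℤ)) 1 *
    ∑ n ∈ range r,
      HahnSeries.C ((-1) ^ n * ((r - 1).choose n : LaurentPolynomial ℤ) * Y ^ (r - 1 - n)) * z ^ n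

/-- `d = z⁻¹(y + y⁻¹) - 1`. -/
noncomputable def d : LaurentSeries (LaurentPolynomial ℤ) := zinv * HahnSeries.C Y - 1

lemma single_one_mul (a b : ℤ) :
    (HahnSeries.single a 1 : LaurentSeries (LaurentPolynomial ℤ)) * HahnSeries.single b 1 =
      HahnSeries.single (a + b) 1 := by
  rw [HahnSeries.single_mul_single, mul_one]

lemma L_eq (r : ℕ) (hr : 1 ≤ r) :
    L r = HahnSeries.single (1 - (r : ℤ)) 1 * (HahnSeries.C Y - z) ^ (r - 1) := by
  obtain ⟨k, rfl⟩ : ∃ k, r = k + 1 := ⟨r - 1, by omega⟩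
  unfold L
  congr 1
  rw [sub_pow, Nat.add_sub_cancel]
  conv_rhs => rw [← Finset.sum_range_reflect]
  apply Finset.sum_congr rfl
  intro n hn
  rw [Finset.mem_range] at hn
  have hn' : n ≤ k := by omega
  have h2 : k - (k - n) = n := by omega
  have h3 : (k - n) + k = n + 2 * (k - n) := by omega
  have h4 : k + 1 - 1 - n = k - n := by omega
  rw [h4, h2, h3, Nat.choose_symm hn', pow_add, pow_mul]
  simp only [neg_one_sq, one_pow, mul_one, map_mul, map_pow, map_neg, map_one, map_natCast]
  ring

lemma d_eq : d = HahnSeries.single (-1 : ℤ) 1 * (HahnSeries.C Y - z) := by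
  unfold d zinv z
  rw [mul_sub]
  congr 1
  rw [HahnSeries.single_mul_single, neg_add_cancel, mul_one]
  rfl

/-- Disjoint-union formula on trivial diagrams: `d · L(r) · L(r') = L (r + r')`. -/
theorem stmt4 (r r' : ℕ) (hr : 1 ≤ r) (hr' : 1 ≤ r') :
    d * L r * L r' = L (r + r') := by
  rw [d_eq, L_eq r hr, L_eq r' hr', L_eq (r + r') (by omega)]
  have hpow : (HahnSeries.C Y - z) * (HahnSeries.C Y - z) ^ (r - 1) *
      (HahnSeries.C Y - z) ^ (r' - 1) = (HahnSeries.C Y - z) ^ (r + r' - 1) := by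
    rw [← pow_succ', ← pow_add]
    congr 1
    omega
  calc HahnSeries.single (-1 : ℤ) 1 * (HahnSeries.C Y - z) *
        (HahnSeries.single (1 - (r : ℤ)) 1 * (HahnSeries.C Y - z) ^ (r - 1)) *
        (HahnSeries.single (1 - (r' : ℤ)) 1 * (HahnSeries.C Y - z) ^ (r' - 1))
      = (HahnSeries.single (-1 : ℤ) 1 * HahnSeries.single (1 - (r : ℤ)) 1 *
          HahnSeries.single (1 - (r' : ℤ)) 1) *
        ((HahnSeries.C Y - z) * (HahnSeries.C Y - z) ^ (r - 1) *
          (HahnSeries.C Y - z) ^ (r' - 1)) := by ring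
    _ = HahnSeries.single (1 - ((r + r' : ℕ) : ℤ)) 1 * (HahnSeries.C Y - z) ^ (r + r' - 1) := by
        rw [single_one_mul, single_one_mul, hpow]
        congr 2
        push_cast
        ring
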